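/- arXiv:2401.07024 — 3 statements merged into one kernel-verified Lean document; each statement's English description precedes it below -/
import Mathlib

section
/- The Weyl chamber of the hyperoctahedral group acting on the unit sphere S^{n-1} ⊂ ℝ^n, i.e. the set of unit vectors with non-negative coordinates arranged in non-increasing order, has spherical diameter arccos(1/√n); that is, the maximal geodesic distance between two points x, y in the chamber (given by arccos(x·y)) equals arccos(1/√n), and this value lies in [π/4, π/2). -/
open Finset

/-- Abel summation identity. -/
lemma wc_abel (a b : ℕ → ℝ) (n : ℕ) :
    ∑ i ∈ range n, a i * b i =
      (∑ k ∈ range n, (b k - b (k+1)) * ∑ i ∈ range (k+1), a i)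
        + b n * ∑ i ∈ range n, a i := by
  induction n with
  | zero => simp
  | succ n ih =>
    rw [sum_range_succ, ih, sum_range_succ (fun k => (b k - b (k+1)) * ∑ i ∈ range (k+1), a i),
      sum_range_succ a n]
    ring

/-- First m squares of a nonincreasing nonneg sequence dominate the average. -/
lemma wc_head (a : ℕ → ℝ) (ha0 : ∀ i, 0 ≤ a i) (hanti : ∀ i j, i ≤ j → a j ≤ a i)
    (n m : ℕ) (hm : m ≤ n) :
    (m : ℝ) * ∑ i ∈ range n, a i ^ 2 ≤ (n : ℝ) * ∑ i ∈ range m, a i ^ 2 := by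
  have hsplit : ∑ i ∈ range n, a i ^ 2
      = ∑ i ∈ range m, a i ^ 2 + ∑ i ∈ Ico m n, a i ^ 2 := by
    rw [← sum_range_add_sum_Ico _ hm]
  have htail : ∑ i ∈ Ico m n, a i ^ 2 ≤ (n - m : ℝ) * a m ^ 2 := by
    calc ∑ i ∈ Ico m n, a i ^ 2 ≤ ∑ i ∈ Ico m n, a m ^ 2 := by
          apply sum_le_sum
          intro i hi
          have := hanti m i (mem_Ico.mp hi).1
          exact pow_le_pow_left₀ (ha0 i) this 2
      _ = (n - m : ℝ) * a m ^ 2 := by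
          rw [sum_const, Nat.card_Ico, nsmul_eq_mul, Nat.cast_sub hm]
  have hhead : (m : ℝ) * a m ^ 2 ≤ ∑ i ∈ range m, a i ^ 2 := by
    calc (m : ℝ) * a m ^ 2 = ∑ _i ∈ range m, a m ^ 2 := by simp [mul_comm]
      _ ≤ ∑ i ∈ range m, a i ^ 2 := by
          apply sum_le_sum
          intro i hi
          exact pow_le_pow_left₀ (ha0 m) (hanti i m (mem_range.mp hi).le) 2
  have hmn : (m : ℝ) ≤ n := by exact_mod_cast hm
  nlinarith [sq_nonneg (a m), sum_nonneg (fun i (_ : i ∈ range m) => sq_nonneg (a i))]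

/-- Key inequality: two nonincreasing, nonnegative unit sequences have
inner product at least `1/√n`. -/
lemma wc_key (n : ℕ) (hn : 0 < n) (a b : ℕ → ℝ)
    (ha0 : ∀ i, 0 ≤ a i) (hb0 : ∀ i, 0 ≤ b i)
    (haanti : ∀ i j, i ≤ j → a j ≤ a i) (hbanti : ∀ i j, i ≤ j → b j ≤ b i)
    (hbn : b n = 0)
    (ha2 : ∑ i ∈ range n, a i ^ 2 = 1) (hb2 : ∑ i ∈ range n, b i ^ 2 = 1) :
    1 / Real.sqrt n ≤ ∑ i ∈ range n, a i * b i := by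
  have hsn : (0:ℝ) < Real.sqrt n := Real.sqrt_pos.mpr (by exact_mod_cast hn)
  have hA : ∀ k ∈ range n, Real.sqrt (k+1) / Real.sqrt n ≤ ∑ i ∈ range (k+1), a i := by
    intro k hk
    have hk' : k + 1 ≤ n := mem_range.mp hk
    have h1 : ((k:ℝ)+1) * 1 ≤ (n:ℝ) * ∑ i ∈ range (k+1), a i ^ 2 := by
      have := wc_head a ha0 haanti n (k+1) hk'
      rw [ha2] at this
      exact_mod_cast this
    have h2 : ∑ i ∈ range (k+1), a i ^ 2 ≤ (∑ i ∈ range (k+1), a i) ^ 2 :=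
      sum_sq_le_sq_sum_of_nonneg (fun i _ => ha0 i)
    have hApos : (0:ℝ) ≤ ∑ i ∈ range (k+1), a i := sum_nonneg fun i _ => ha0 i
    rw [div_le_iff₀ hsn]
    have : ((k:ℝ)+1) ≤ ((∑ i ∈ range (k+1), a i) * Real.sqrt n) ^ 2 := by
      rw [mul_pow, Real.sq_sqrt (by positivity : (0:ℝ) ≤ (n:ℝ))]
      nlinarith
    calc Real.sqrt (k+1) ≤ Real.sqrt (((∑ i ∈ range (k+1), a i) * Real.sqrt n) ^ 2) :=
          Real.sqrt_le_sqrt (by linarith)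
      _ = (∑ i ∈ range (k+1), a i) * Real.sqrt n := Real.sqrt_sq (by positivity)
  have hB : ∀ k ∈ range n, ∑ i ∈ range (k+1), b i ≤ Real.sqrt (k+1) := by
    intro k hk
    have hk' : k + 1 ≤ n := mem_range.mp hk
    have h1 : (∑ i ∈ range (k+1), b i) ^ 2 ≤ ((k:ℝ)+1) * ∑ i ∈ range (k+1), b i ^ 2 := by
      have := sq_sum_le_card_mul_sum_sq (s := range (k+1)) (f := b)
      simpa using this
    have h2 : ∑ i ∈ range (k+1), b i ^ 2 ≤ 1 := by
      rw [← hb2]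
      exact sum_le_sum_of_subset_of_nonneg (range_subset_range.mpr hk')
        (fun i _ _ => sq_nonneg (b i))
    have hBpos : (0:ℝ) ≤ ∑ i ∈ range (k+1), b i := sum_nonneg fun i _ => hb0 i
    rw [show ((k:ℝ)+1 : ℝ) = (((k+1 : ℕ)):ℝ) by push_cast; ring] at h1 ⊢
    rw [Real.le_sqrt hBpos]
    · nlinarith
    · positivity
  have habel := wc_abel a b n
  have hbbel := wc_abel b b n
  rw [hbn, zero_mul, add_zero] at habel hbbel
  simp only [← sq] at hbbel
  rw [hb2] at hbbel
  have hd : ∀ k, 0 ≤ b k - b (k+1) := fun k => sub_nonneg.mpr (hbanti k (k+1) (by omega))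
  rw [habel, div_le_iff₀ hsn]
  calc (1:ℝ) = ∑ k ∈ range n, (b k - b (k+1)) * ∑ i ∈ range (k+1), b i := hbbel
    _ ≤ ∑ k ∈ range n, (b k - b (k+1)) * (Real.sqrt (k+1)) := by
        apply sum_le_sum; intro k hk
        exact mul_le_mul_of_nonneg_left (hB k hk) (hd k)
    _ ≤ ∑ k ∈ range n, (b k - b (k+1)) * ((∑ i ∈ range (k+1), a i) * Real.sqrt n) := by
        apply sum_le_sum; intro k hk
        apply mul_le_mul_of_nonneg_left _ (hd k)
        have := hA k hk
        rw [div_le_iff₀ hsn] at this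
        exact this
    _ = (∑ k ∈ range n, (b k - b (k+1)) * ∑ i ∈ range (k+1), a i) * Real.sqrt n := by
        rw [sum_mul]; apply sum_congr rfl; intro k _; ring

/-- `arccos` is antitone. -/
lemma wc_arccos_anti {s t : ℝ} (h : s ≤ t) : Real.arccos t ≤ Real.arccos s := by
  rw [Real.arccos_eq_pi_div_two_sub_arcsin, Real.arccos_eq_pi_div_two_sub_arcsin]
  exact sub_le_sub_left (Real.monotone_arcsin h) _

/-- The Weyl chamber of the hyperoctahedral group on the unit sphere
`S^{n-1} ⊂ ℝ^n`: unit vectors with non-negative, non-increasing coordinates. -/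
def weylChamber (n : ℕ) : Set (Fin n → ℝ) :=
  {x | (∑ i, x i ^ 2 = 1) ∧ (∀ i j, i ≤ j → x j ≤ x i) ∧ (∀ i, 0 ≤ x i)}

/-- The Weyl chamber has spherical diameter `arccos (1/√n)`, and this value
lies in `[π/4, π/2)`. -/
theorem weylChamber_diameter (n : ℕ) (hn : 2 ≤ n) :
    IsGreatest {d : ℝ | ∃ x ∈ weylChamber n, ∃ y ∈ weylChamber n,
        d = Real.arccos (∑ i, x i * y i)}
      (Real.arccos (1 / Real.sqrt n)) ∧
    Real.pi / 4 ≤ Real.arccos (1 / Real.sqrt n) ∧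
    Real.arccos (1 / Real.sqrt n) < Real.pi / 2 := by
  have hn0 : 0 < n := by omega
  haveI : NeZero n := ⟨by omega⟩
  have hnR : (0:ℝ) < n := by exact_mod_cast hn0
  have hsn : (0:ℝ) < Real.sqrt n := Real.sqrt_pos.mpr hnR
  have hpos : (0:ℝ) < 1 / Real.sqrt n := by positivity
  refine ⟨⟨?_, ?_⟩, ?_, Real.arccos_lt_pi_div_two.mpr hpos⟩
  · -- membership: witnesses e₀ and the uniform vector
    refine ⟨(fun i => if i = 0 then 1 else 0), ⟨?_, ?_, ?_⟩,
      (fun _ => 1 / Real.sqrt n), ⟨?_, ?_, ?_⟩, ?_⟩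
    · rw [show (fun i : Fin n => (if i = 0 then (1:ℝ) else 0) ^ 2)
          = fun i : Fin n => (if i = 0 then (1:ℝ) else 0) by
        funext i; by_cases h : i = 0 <;> simp [h]]
      simp
    · intro i j hij
      by_cases hj : j = 0
      · have hi : i = 0 := by have h0 : i ≤ 0 := le_of_le_of_eq hij hj; exact le_antisymm h0 (Fin.zero_le i)
        simp [hi, hj]
      · by_cases hi : i = 0 <;> simp [hi, hj]
    · intro i; by_cases hi : i = 0 <;> simp [hi]
    · rw [Finset.sum_const, Finset.card_univ, Fintype.card_fin, nsmul_eq_mul]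
      rw [div_pow, one_pow, Real.sq_sqrt hnR.le]
      field_simp
    · exact fun i j _ => le_refl _
    · intro i; positivity
    · have : ∑ i : Fin n, (fun i : Fin n => if i = 0 then (1:ℝ) else 0) i
          * (fun _ : Fin n => 1 / Real.sqrt n) i = 1 / Real.sqrt n := by
        rw [show (fun i : Fin n => (if i = 0 then (1:ℝ) else 0) * (1 / Real.sqrt n))
            = fun i : Fin n => (if i = 0 then 1 / Real.sqrt n else 0) by
          funext i; by_cases h : i = 0 <;> simp [h]]
        simp
      rw [this]
  · -- upper bound
    rintro d ⟨x, hx, y, hy, rfl⟩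
    apply wc_arccos_anti
    -- extend x and y to ℕ by zero
    set a : ℕ → ℝ := fun i => if h : i < n then x ⟨i, h⟩ else 0 with ha
    set b : ℕ → ℝ := fun i => if h : i < n then y ⟨i, h⟩ else 0 with hb
    have hext : ∀ (z : Fin n → ℝ) (hz : z ∈ weylChamber n) (i j : ℕ), i ≤ j →
        (if h : j < n then z ⟨j, h⟩ else 0) ≤ (if h : i < n then z ⟨i, h⟩ else 0) := by
      intro z hz i j hij
      by_cases hjn : j < n
      · have hin : i < n := lt_of_le_of_lt hij hjn
        rw [dif_pos hjn, dif_pos hin]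
        exact hz.2.1 ⟨i, hin⟩ ⟨j, hjn⟩ hij
      · rw [dif_neg hjn]
        by_cases hin : i < n
        · rw [dif_pos hin]; exact hz.2.2 _
        · rw [dif_neg hin]
    have conv : ∀ (F : Fin n → ℝ) (g : ℕ → ℝ), (∀ i : Fin n, g i = F i) →
        ∑ i ∈ range n, g i = ∑ i : Fin n, F i := by
      intro F g h
      rw [← Fin.sum_univ_eq_sum_range]
      exact Finset.sum_congr rfl fun i _ => h i
    have hax : ∀ i : Fin n, a (i : ℕ) = x i := fun i => by
      simp only [ha, dif_pos i.isLt]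
    have hby : ∀ i : Fin n, b (i : ℕ) = y i := fun i => by
      simp only [hb, dif_pos i.isLt]
    have key := wc_key n hn0 a b
      (fun i => by by_cases h : i < n
                   · simp only [ha, dif_pos h]; exact hx.2.2 _
                   · simp only [ha, dif_neg h]; exact le_refl 0)
      (fun i => by by_cases h : i < n
                   · simp only [hb, dif_pos h]; exact hy.2.2 _
                   · simp only [hb, dif_neg h]; exact le_refl 0)
      (hext x hx) (hext y hy)
      (by simp only [hb, dif_neg (lt_irrefl n)])
      (by rw [conv (fun i => x i ^ 2) _ (fun i => by rw [hax i])]; exact hx.1)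
      (by rw [conv (fun i => y i ^ 2) _ (fun i => by rw [hby i])]; exact hy.1)
    rwa [conv (fun i => x i * y i) _ (fun i => by rw [hax i, hby i])] at key
  · -- π/4 lower bound
    have h2 : Real.sqrt 2 ≤ Real.sqrt n := Real.sqrt_le_sqrt (by exact_mod_cast hn)
    have hs2 : (0:ℝ) < Real.sqrt 2 := by positivity
    have hle : 1 / Real.sqrt n ≤ Real.sqrt 2 / 2 := by
      rw [show Real.sqrt 2 / 2 = 1 / Real.sqrt 2 by
        rw [div_eq_div_iff (by norm_num : (2:ℝ) ≠ 0) (ne_of_gt hs2),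
          Real.mul_self_sqrt (by norm_num : (0:ℝ) ≤ 2)]; norm_num]
      exact one_div_le_one_div_of_le hs2 h2
    have : Real.arccos (Real.sqrt 2 / 2) = Real.pi / 4 := by
      rw [← Real.cos_pi_div_four, Real.arccos_cos (by positivity) (by linarith [Real.pi_pos])]
    calc Real.pi / 4 = Real.arccos (Real.sqrt 2 / 2) := this.symm
      _ ≤ Real.arccos (1 / Real.sqrt n) := wc_arccos_anti hle
end

section
/- For n ≥ 2, the conjugation action of the group of signed permutation matrices (the hyperoctahedral group S_n ≀ ℤ_2, realized as n×n orthogonal matrices with exactly one nonzero entry ±1 in each row and column) on the space of real skew-symmetric n×n matrices so(n,ℝ) is irreducible: the only subspaces of so(n,ℝ) invariant under all maps Ω ↦ WΩWᵀ for signed permutation matrices W are {0} and so(n,ℝ) itself. -/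
/-!
Conjugating `Ω` by the sign flip `D_p = diag(±1)`, with `-1` in position `p`, negates the
off-diagonal entries of row and column `p` and fixes all others, so `Ω - D_p Ω D_p` keeps exactly
(twice) those entries. Doing this for `p = j` and then for `p = i` cuts a skew-symmetric `Ω` down
to `4 Ω_ij (E_ij - E_ji)`. Hence a nonzero invariant subspace contains some `E_ij - E_ji`; since
the permutation matrices act 2-transitively on index pairs, it contains every `E_kl - E_lk`, and
these span `so(n)`.
-/

open Matrix
/-- A signed permutation matrix: an orthogonal matrix with exactly one nonzero
entry `±1` in each row and column. -/
def IsSignedPerm {n : ℕ} (W : Matrix (Fin n) (Fin n) ℝ) : Prop :=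
  ∃ (g : Equiv.Perm (Fin n)) (ε : Fin n → ℝ),
    (∀ i, ε i = 1 ∨ ε i = -1) ∧ ∀ i j, W i j = if j = g i then ε i else 0

/-- The space `so(n,ℝ)` of real skew-symmetric matrices as a submodule. -/
def soSubmodule (n : ℕ) : Submodule ℝ (Matrix (Fin n) (Fin n) ℝ) where
  carrier := {Ω | Ωᵀ = -Ω}
  add_mem' := by
    intro a b ha hb
    simp only [Set.mem_setOf_eq] at *
    rw [Matrix.transpose_add, ha, hb, neg_add]
  zero_mem' := by simp
  smul_mem' := by
    intro c a ha
    simp only [Set.mem_setOf_eq] at *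
    rw [Matrix.transpose_smul, ha, smul_neg]

namespace Matrix

variable {ι R : Type*} [DecidableEq ι] [CommRing R]

def signedPermMatrix (g : Equiv.Perm ι) (ε : ι → R) : Matrix ι ι R :=
  of fun i j => if j = g i then ε i else 0

def skewSingle (i j : ι) : Matrix ι ι R :=
  single i j 1 - single j i 1

def signFlip (p : ι) : ι → R :=
  fun k => if k = p then -1 else 1

theorem skewSingle_self (i : ι) : skewSingle i i = (0 : Matrix ι ι R) :=
  sub_self _

theorem submatrix_skewSingle (g : Equiv.Perm ι) (i j : ι) :
    (skewSingle i j : Matrix ι ι R).submatrix g g = skewSingle (g.symm i) (g.symm j) := by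
  simp [skewSingle, submatrix_sub]

variable [Fintype ι]

theorem signedPermMatrix_mul_mul_transpose_apply (g : Equiv.Perm ι) (ε : ι → R)
    (Ω : Matrix ι ι R) (i j : ι) :
    (signedPermMatrix g ε * Ω * (signedPermMatrix g ε)ᵀ) i j = ε i * ε j * Ω (g i) (g j) := by
  simp only [signedPermMatrix, mul_apply, transpose_apply, of_apply, ite_mul, mul_ite,
    zero_mul, mul_zero, Finset.sum_ite_eq', Finset.mem_univ, if_true]
  ring

theorem signedPermMatrix_one_mul_mul_transpose (g : Equiv.Perm ι) (Ω : Matrix ι ι R) :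
    signedPermMatrix g 1 * Ω * (signedPermMatrix g 1)ᵀ = Ω.submatrix g g := by
  ext i j
  simp [signedPermMatrix_mul_mul_transpose_apply]

def flipDiff (p : ι) (Ω : Matrix ι ι R) : Matrix ι ι R :=
  Ω - signedPermMatrix 1 (signFlip p) * Ω * (signedPermMatrix 1 (signFlip p))ᵀ

theorem flipDiff_apply (p : ι) (Ω : Matrix ι ι R) (k l : ι) :
    flipDiff p Ω k l = (1 - signFlip p k * signFlip p l) * Ω k l := by
  rw [flipDiff, sub_apply, signedPermMatrix_mul_mul_transpose_apply, Equiv.Perm.one_apply,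
    Equiv.Perm.one_apply]
  ring

theorem flipDiff_flipDiff {Ω : Matrix ι ι R} (hΩ : Ωᵀ = -Ω) {i j : ι} (hij : i ≠ j) :
    flipDiff i (flipDiff j Ω) = (4 * Ω i j) • skewSingle i j := by
  have hji : Ω j i = -Ω i j := by simpa using congrFun (congrFun hΩ i) j
  ext k l
  simp only [flipDiff_apply, signFlip, skewSingle, smul_apply, sub_apply, single_apply,
    smul_eq_mul]
  -- `1 - signFlip p k * signFlip p l` vanishes unless exactly one of `k, l` is `p`
  grind

theorem sub_transpose_eq_sum_smul_skewSingle (Ω : Matrix ι ι R) :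
    Ω - Ωᵀ = ∑ k, ∑ l, Ω k l • skewSingle k l := by
  conv_lhs => rw [matrix_eq_sum_single Ω]
  simp only [transpose_sum, transpose_single, skewSingle, smul_sub, Finset.sum_sub_distrib,
    smul_single, smul_eq_mul, mul_one]

end Matrix

section

variable {n : ℕ}

def IsSignedPermInvariant (S : Submodule ℝ (Matrix (Fin n) (Fin n) ℝ)) : Prop :=
  ∀ W : Matrix (Fin n) (Fin n) ℝ, IsSignedPerm W → ∀ Ω ∈ S, W * Ω * Wᵀ ∈ S

theorem isSignedPerm_signedPermMatrix (g : Equiv.Perm (Fin n)) {ε : Fin n → ℝ}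
    (hε : ∀ i, ε i = 1 ∨ ε i = -1) : IsSignedPerm (signedPermMatrix g ε) :=
  ⟨g, ε, hε, fun _ _ => rfl⟩

theorem isSignedPerm_signFlip (p : Fin n) :
    IsSignedPerm (signedPermMatrix 1 (signFlip p : Fin n → ℝ)) :=
  isSignedPerm_signedPermMatrix 1 fun k => by by_cases h : k = p <;> simp [signFlip, h]

theorem soSubmodule_le_of_forall_skewSingle_mem {S : Submodule ℝ (Matrix (Fin n) (Fin n) ℝ)}
    (h : ∀ k l, skewSingle k l ∈ S) : soSubmodule n ≤ S := by
  intro Θ (hΘ : Θᵀ = -Θ)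
  have hhalf : Θ = (2⁻¹ : ℝ) • (Θ - Θᵀ) := by
    rw [hΘ, sub_neg_eq_add, ← two_smul ℝ, smul_smul, inv_mul_cancel₀ two_ne_zero, one_smul]
  rw [hhalf, sub_transpose_eq_sum_smul_skewSingle]
  exact S.smul_mem _ <| S.sum_mem fun k _ => S.sum_mem fun l _ => S.smul_mem _ (h k l)

namespace IsSignedPermInvariant

variable {S : Submodule ℝ (Matrix (Fin n) (Fin n) ℝ)}

theorem flipDiff_mem (hS : IsSignedPermInvariant S) {Ω : Matrix (Fin n) (Fin n) ℝ}
    (hΩ : Ω ∈ S) (p : Fin n) : flipDiff p Ω ∈ S :=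
  S.sub_mem hΩ (hS _ (isSignedPerm_signFlip p) Ω hΩ)

theorem skewSingle_mem (hS : IsSignedPermInvariant S) {Ω : Matrix (Fin n) (Fin n) ℝ}
    (hΩS : Ω ∈ S) (hΩ : Ωᵀ = -Ω) {i j : Fin n} (hij : i ≠ j) (hΩij : Ω i j ≠ 0) :
    skewSingle i j ∈ S := by
  have h := S.smul_mem (4 * Ω i j)⁻¹ (hS.flipDiff_mem (hS.flipDiff_mem hΩS j) i)
  rwa [flipDiff_flipDiff hΩ hij, smul_smul, inv_mul_cancel₀ (by positivity), one_smul] at h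

theorem skewSingle_mem_of_skewSingle_mem (hS : IsSignedPermInvariant S) {i j : Fin n}
    (hij : i ≠ j) (h : skewSingle i j ∈ S) (k l : Fin n) : skewSingle k l ∈ S := by
  obtain rfl | hkl := eq_or_ne k l
  · simp [skewSingle_self]
  obtain ⟨g, hgk, hgl⟩ := MulAction.is_two_pretransitive_iff.mp
    (Equiv.Perm.isMultiplyPretransitive (Fin n) 2) hij hkl
  have h' := hS _ (isSignedPerm_signedPermMatrix g.symm (ε := 1) fun _ => Or.inl rfl) _ h
  rwa [signedPermMatrix_one_mul_mul_transpose, submatrix_skewSingle, Equiv.symm_symm,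
    ← Equiv.Perm.smul_def, hgk, ← Equiv.Perm.smul_def, hgl] at h'

end IsSignedPermInvariant

end

theorem hyperoctahedral_irreducible_on_so_general (n : ℕ)
    (S : Submodule ℝ (Matrix (Fin n) (Fin n) ℝ))
    (hS : S ≤ soSubmodule n)
    (hinv : ∀ W : Matrix (Fin n) (Fin n) ℝ, IsSignedPerm W →
      ∀ Ω ∈ S, W * Ω * Wᵀ ∈ S) :
    S = ⊥ ∨ S = soSubmodule n := by
  have hinv : IsSignedPermInvariant S := hinv
  refine or_iff_not_imp_left.2 fun hbot => le_antisymm hS ?_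
  obtain ⟨Ω, hΩS, hΩ⟩ := Submodule.exists_mem_ne_zero_of_ne_bot hbot
  have hskew : Ωᵀ = -Ω := hS hΩS
  obtain ⟨i, j, hΩij⟩ : ∃ i j, Ω i j ≠ 0 := by
    by_contra! h
    exact hΩ (ext h)
  have hij : i ≠ j := by
    rintro rfl
    exact hΩij (self_eq_neg.mp (by simpa using congrFun (congrFun hskew i) i))
  exact soSubmodule_le_of_forall_skewSingle_mem <|
    hinv.skewSingle_mem_of_skewSingle_mem hij (hinv.skewSingle_mem hΩS hskew hij hΩij)

/-- The conjugation action of the hyperoctahedral group on `so(n,ℝ)` is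
irreducible: the only invariant subspaces are `{0}` and `so(n,ℝ)`. -/
theorem hyperoctahedral_irreducible_on_so (n : ℕ) (hn : 2 ≤ n)
    (S : Submodule ℝ (Matrix (Fin n) (Fin n) ℝ))
    (hS : S ≤ soSubmodule n)
    (hinv : ∀ W : Matrix (Fin n) (Fin n) ℝ, IsSignedPerm W →
      ∀ Ω ∈ S, W * Ω * Wᵀ ∈ S) :
    S = ⊥ ∨ S = soSubmodule n :=
  hyperoctahedral_irreducible_on_so_general n S hS hinv
end

section
/- Let Ω ∈ so(n,ℝ) be a nonzero skew-symmetric matrix and let W run over diagonal matrices with entries ±1 and permutation matrices. Then the linear span of {WΩWᵀ} contains some elementary skew-symmetric matrix e_{ij} = E_{ij} - E_{ji}, and consequently contains all of so(n,ℝ). -/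
open Matrix

/-- The signed permutation matrix with permutation `g` and signs `ε`. -/
def spMat {n : ℕ} (g : Equiv.Perm (Fin n)) (ε : Fin n → ℝ) : Matrix (Fin n) (Fin n) ℝ :=
  Matrix.of fun i j => if j = g i then ε i else 0

lemma spMat_isSignedPerm {n : ℕ} (g : Equiv.Perm (Fin n)) (ε : Fin n → ℝ)
    (hε : ∀ i, ε i = 1 ∨ ε i = -1) : IsSignedPerm (spMat g ε) :=
  ⟨g, ε, hε, fun _ _ => rfl⟩

lemma spMat_conj_apply {n : ℕ} (g : Equiv.Perm (Fin n)) (ε : Fin n → ℝ)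
    (M : Matrix (Fin n) (Fin n) ℝ) (a b : Fin n) :
    (spMat g ε * M * (spMat g ε)ᵀ) a b = ε a * ε b * M (g a) (g b) := by
  simp [spMat, mul_apply, transpose_apply, ite_mul, mul_ite, Finset.sum_ite_eq',
    Finset.sum_ite_eq]
  ring

lemma spMat_mul {n : ℕ} (g g' : Equiv.Perm (Fin n)) (ε ε' : Fin n → ℝ) :
    spMat g ε * spMat g' ε' = spMat (g.trans g') (fun i => ε i * ε' (g i)) := by
  ext i j
  simp only [spMat, mul_apply, Matrix.of_apply, ite_mul, mul_ite, zero_mul, Equiv.trans_apply]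
  rw [Finset.sum_eq_single (g i)]
  · simp
    congr 1
  · intro c _ hc; simp [hc]
  · simp

lemma isSignedPerm_eq_spMat {n : ℕ} {W : Matrix (Fin n) (Fin n) ℝ} (h : IsSignedPerm W) :
    ∃ g ε, (∀ i, ε i = 1 ∨ ε i = -1) ∧ W = spMat g ε := by
  obtain ⟨g, ε, hε, hW⟩ := h
  exact ⟨g, ε, hε, by ext i j; simp [spMat, hW]⟩

/-- For a nonzero skew-symmetric `Ω`, the span of the conjugates `W Ω Wᵀ` over
signed permutation matrices `W` contains an elementary skew-symmetric matrix
`e_{ij} = E_{ij} - E_{ji}`, and consequently all of `so(n,ℝ)`. -/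
theorem span_signedPerm_orbit (n : ℕ) (Ω : Matrix (Fin n) (Fin n) ℝ)
    (hskew : Ωᵀ = -Ω) (hne : Ω ≠ 0) :
    (∃ i j : Fin n, i ≠ j ∧
      Matrix.single i j (1 : ℝ) - Matrix.single j i (1 : ℝ) ∈
        Submodule.span ℝ {M | ∃ W, IsSignedPerm W ∧ M = W * Ω * Wᵀ}) ∧
    ∀ A : Matrix (Fin n) (Fin n) ℝ, Aᵀ = -A →
      A ∈ Submodule.span ℝ {M | ∃ W, IsSignedPerm W ∧ M = W * Ω * Wᵀ} := by
  set S : Set (Matrix (Fin n) (Fin n) ℝ) := {M | ∃ W, IsSignedPerm W ∧ M = W * Ω * Wᵀ} with hS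
  -- the set S is invariant under conjugation
  have hSinv : ∀ W, IsSignedPerm W → ∀ M ∈ S, W * M * Wᵀ ∈ S := by
    rintro W hW M ⟨W', hW', rfl⟩
    obtain ⟨g, ε, hε, rfl⟩ := isSignedPerm_eq_spMat hW
    obtain ⟨g', ε', hε', rfl⟩ := isSignedPerm_eq_spMat hW'
    refine ⟨spMat g ε * spMat g' ε', ?_, by
      simp only [Matrix.transpose_mul, Matrix.mul_assoc]⟩
    rw [spMat_mul]
    refine spMat_isSignedPerm _ _ fun i => ?_
    rcases hε i with h1 | h1 <;> rcases hε' (g i) with h2 | h2 <;> simp [h1, h2]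
  -- the span is invariant under conjugation
  have hspan_inv : ∀ W, IsSignedPerm W → ∀ x ∈ Submodule.span ℝ S,
      W * x * Wᵀ ∈ Submodule.span ℝ S := by
    intro W hW x hx
    induction hx using Submodule.span_induction with
    | mem y hy => exact Submodule.subset_span (hSinv W hW y hy)
    | zero => simpa using Submodule.zero_mem _
    | add y z _ _ hy hz => rw [mul_add, add_mul]; exact Submodule.add_mem _ hy hz
    | smul c y _ hy =>
        rw [Matrix.mul_smul, Matrix.smul_mul]; exact Submodule.smul_mem _ _ hy
  -- find a nonzero entry, necessarily off-diagonal
  have hdiag : ∀ a : Fin n, Ω a a = 0 := by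
    intro a
    have := congrFun (congrFun hskew a) a
    simp [transpose_apply] at this
    linarith
  obtain ⟨i, j, hij⟩ : ∃ i j, Ω i j ≠ 0 := by
    by_contra h
    push_neg at h
    exact hne (by ext a b; simp [h])
  have hne_ij : i ≠ j := by rintro rfl; exact hij (hdiag i)
  -- the elementary matrix e_{ij} lies in the span
  have hΩmem : Ω ∈ S := by
    refine ⟨spMat (Equiv.refl _) (fun _ => 1), spMat_isSignedPerm _ _ (fun _ => Or.inl rfl), ?_⟩
    ext a b
    rw [spMat_conj_apply]
    simp
  set εi : Fin n → ℝ := fun a => if a = i then -1 else 1 with hεi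
  set εj : Fin n → ℝ := fun a => if a = j then -1 else 1 with hεj
  have eii : εi i = -1 := by simp [hεi]
  have ejj : εj j = -1 := by simp [hεj]
  have eij : εi j = 1 := by simp [hεi, Ne.symm hne_ij]
  have eji : εj i = 1 := by simp [hεj, hne_ij]
  have eia : ∀ a, a ≠ i → εi a = 1 := fun a ha => by simp [hεi, ha]
  have eja : ∀ a, a ≠ j → εj a = 1 := fun a ha => by simp [hεj, ha]
  have hεi' : ∀ a, εi a = 1 ∨ εi a = -1 := fun a => by by_cases h : a = i <;> simp [hεi, h]
  have hεj' : ∀ a, εj a = 1 ∨ εj a = -1 := fun a => by by_cases h : a = j <;> simp [hεj, h]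
  have hεij' : ∀ a, εi a * εj a = 1 ∨ εi a * εj a = -1 := fun a => by
    rcases hεi' a with h1 | h1 <;> rcases hεj' a with h2 | h2 <;> simp [h1, h2]
  have hkey : Matrix.single i j (1 : ℝ) - Matrix.single j i (1 : ℝ)
      = (4 * Ω i j)⁻¹ • (Ω - spMat (Equiv.refl _) εi * Ω * (spMat (Equiv.refl _) εi)ᵀ
        - spMat (Equiv.refl _) εj * Ω * (spMat (Equiv.refl _) εj)ᵀ
        + spMat (Equiv.refl _) (fun a => εi a * εj a) * Ω *
            (spMat (Equiv.refl _) (fun a => εi a * εj a))ᵀ) := by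
    ext a b
    simp only [Matrix.sub_apply, Matrix.add_apply, Matrix.smul_apply, smul_eq_mul,
      spMat_conj_apply, Equiv.refl_apply, Matrix.single]
    have hba : Ω b a = -Ω a b := by
      have := congrFun (congrFun hskew a) b
      simpa [transpose_apply] using this
    by_cases ha : a = i <;> by_cases hb : b = i <;> by_cases ha' : a = j <;>
      by_cases hb' : b = j <;>
      simp_all [eii, ejj, eij, eji, eia, eja, eq_comm] <;> (try field_simp) <;> (try ring)
  have heij : Matrix.single i j (1 : ℝ) - Matrix.single j i (1 : ℝ)
      ∈ Submodule.span ℝ S := by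
    rw [hkey]
    refine Submodule.smul_mem _ _ ?_
    refine Submodule.add_mem _ (Submodule.sub_mem _ (Submodule.sub_mem _ ?_ ?_) ?_) ?_
    · exact Submodule.subset_span hΩmem
    · exact Submodule.subset_span ⟨_, spMat_isSignedPerm _ _ hεi', rfl⟩
    · exact Submodule.subset_span ⟨_, spMat_isSignedPerm _ _ hεj', rfl⟩
    · exact Submodule.subset_span ⟨_, spMat_isSignedPerm _ _ hεij', rfl⟩
  -- every e_{kl}, k ≠ l, lies in the span
  have hE : ∀ k l : Fin n, k ≠ l →
      Matrix.single k l (1 : ℝ) - Matrix.single l k (1 : ℝ)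
        ∈ Submodule.span ℝ S := by
    intro k l hkl
    set g1 : Equiv.Perm (Fin n) := Equiv.swap k i with hg1
    have hg1k : g1 k = i := Equiv.swap_apply_left k i
    have hll : g1 l ≠ i := by
      rw [← hg1k]; exact fun h => hkl (g1.injective h).symm
    set g2 : Equiv.Perm (Fin n) := Equiv.swap (g1 l) j with hg2
    set g : Equiv.Perm (Fin n) := g1.trans g2 with hg
    have hgk : g k = i := by
      rw [hg]
      simp only [Equiv.trans_apply, hg1k, hg2]
      exact Equiv.swap_apply_of_ne_of_ne (Ne.symm hll) hne_ij
    have hgl : g l = j := by simp [hg, hg2]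
    set W : Matrix (Fin n) (Fin n) ℝ := spMat g (fun _ => 1) with hW
    have hWsp : IsSignedPerm W := spMat_isSignedPerm _ _ (fun _ => Or.inl rfl)
    have : Matrix.single k l (1 : ℝ) - Matrix.single l k (1 : ℝ)
        = W * (Matrix.single i j (1 : ℝ) - Matrix.single j i (1 : ℝ)) * Wᵀ := by
      ext a b
      rw [hW, spMat_conj_apply]
      have h1 : ∀ c, (i = g c) ↔ (k = c) := fun c => by
        rw [← hgk, Equiv.apply_eq_iff_eq]
      have h2 : ∀ c, (j = g c) ↔ (l = c) := fun c => by
        rw [← hgl, Equiv.apply_eq_iff_eq]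
      simp [Matrix.single, h1, h2]
    rw [this]
    exact hspan_inv W hWsp _ heij
  refine ⟨⟨i, j, hne_ij, heij⟩, ?_⟩
  intro A hA
  have hdecomp : A = ∑ k : Fin n, ∑ l : Fin n,
      (A k l / 2) • (Matrix.single k l (1 : ℝ) - Matrix.single l k (1 : ℝ)) := by
    ext a b
    have hba : A b a = -A a b := by
      have := congrFun (congrFun hA a) b
      simpa [transpose_apply] using this
    simp only [Matrix.sum_apply, Matrix.smul_apply, Matrix.sub_apply, smul_eq_mul,
      Matrix.single, Matrix.of_apply, mul_sub, mul_ite, mul_one, mul_zero]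
    rw [Finset.sum_comm]
    simp [Finset.sum_sub_distrib, ite_and, Finset.sum_ite_eq, Finset.sum_ite_eq', hba]
    ring
  rw [hdecomp]
  refine Submodule.sum_mem _ fun k _ => Submodule.sum_mem _ fun l _ => ?_
  by_cases hkl : k = l
  · subst hkl; simp
  · exact Submodule.smul_mem _ _ (hE k l hkl)
end
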